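/- Let R ⊆ List (ℕ × Bool) be a recursively enumerable set of words, let A ⊆ ℕ be recursively enumerable, and write G := PresentedGroup (FreeGroup.mk '' R). Then for every i ∈ ℕ the set T^A_i := {w ∈ List (ℕ × Bool) | the element of G represented by w lies in tor^A_i(G)} is recursively enumerable, and the set T^A_ω := {w ∈ List (ℕ × Bool) | the element of G represented by w lies in tor^A_ω(G)} is recursively enumerable. -/

import Mathlib

/-- The `X`-torsion of a group `G`: elements `g` with `g ^ n = 1` for some `n ∈ X`. -/
def xTorsion (X : Set ℕ) (G : Type*) [Group G] : Set G := {g | ∃ n ∈ X, g ^ n = 1}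

/-- A group is `X`-torsion-free if its `X`-torsion consists only of the identity. -/
def IsXTorsionFree (X : Set ℕ) (G : Type*) [Group G] : Prop := xTorsion X G = {1}

/-- The set of orders (≥ 2) of torsion elements of `G`. -/
def torord (G : Type*) [Group G] : Set ℕ := {n | 2 ≤ n ∧ ∃ g : G, orderOf g = n}

/-- One step of the `X`-torsion annihilation: the normal closure of the set of elements
whose image in `G ⧸ N` is `X`-torsion (i.e. `g ^ n ∈ N` for some `n ∈ X`). -/
def torStep (X : Set ℕ) {G : Type*} [Group G] (N : Subgroup G) : Subgroup G :=
  Subgroup.normalClosure {g : G | ∃ n ∈ X, g ^ n ∈ N}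

/-- `torX X G n` is `tor^X_n(G)`. -/
def torX (X : Set ℕ) (G : Type*) [Group G] : ℕ → Subgroup G
  | 0 => ⊥
  | n + 1 => torStep X (torX X G n)

lemma torStep_mono (X : Set ℕ) {G : Type*} [Group G] {N M : Subgroup G} (h : N ≤ M) :
    torStep X N ≤ torStep X M :=
  Subgroup.normalClosure_mono (fun g hg => by
    obtain ⟨n, hn, hgn⟩ := hg; exact ⟨n, hn, h hgn⟩)

lemma torX_le_succ (X : Set ℕ) (G : Type*) [Group G] (n : ℕ) :
    torX X G n ≤ torX X G (n + 1) := by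
  induction n with
  | zero => exact bot_le
  | succ n ih => exact torStep_mono X ih

lemma torX_mono (X : Set ℕ) (G : Type*) [Group G] : Monotone (torX X G) :=
  monotone_nat_of_le_succ (torX_le_succ X G)

/-- `tor^X_ω(G) = ⋃_n tor^X_n(G)`, as a subgroup of `G`. -/
def torOmega (X : Set ℕ) (G : Type*) [Group G] : Subgroup G where
  carrier := ⋃ n, (torX X G n : Set G)
  one_mem' := Set.mem_iUnion.mpr ⟨0, Subgroup.one_mem _⟩
  mul_mem' := by
    intro a b ha hb
    obtain ⟨m, hm⟩ := Set.mem_iUnion.mp ha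
    obtain ⟨n, hn⟩ := Set.mem_iUnion.mp hb
    exact Set.mem_iUnion.mpr ⟨max m n, Subgroup.mul_mem _
      (torX_mono X G (le_max_left m n) hm) (torX_mono X G (le_max_right m n) hn)⟩
  inv_mem' := by
    intro a ha
    obtain ⟨m, hm⟩ := Set.mem_iUnion.mp ha
    exact Set.mem_iUnion.mpr ⟨m, Subgroup.inv_mem _ hm⟩

instance torX_normal (X : Set ℕ) (G : Type*) [Group G] (n : ℕ) : (torX X G n).Normal := by
  cases n with
  | zero => exact inferInstanceAs (⊥ : Subgroup G).Normal
  | succ n => exact inferInstanceAs (Subgroup.normalClosure _).Normal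

instance torOmega_normal (X : Set ℕ) (G : Type*) [Group G] : (torOmega X G).Normal := by
  constructor
  intro a ha g
  obtain ⟨m, hm⟩ := Set.mem_iUnion.mp ha
  exact Set.mem_iUnion.mpr ⟨m, (torX_normal X G m).conj_mem a hm g⟩

/-- A predicate on a primcodable type is recursively enumerable if it is the domain of a
partial computable function. -/
def REPred' {α : Type*} [Primcodable α] (p : α → Prop) : Prop :=
  Partrec (fun a => Part.assert (p a) (fun _ => Part.some ()))

/-- A group is finitely presented if it is isomorphic to the group of a finite presentation. -/
def IsFinitelyPresented (G : Type*) [Group G] : Prop :=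
  ∃ (n : ℕ) (rels : Set (FreeGroup (Fin n))), rels.Finite ∧ Nonempty (G ≃* PresentedGroup rels)

/-!
Membership of `w` in `tor^A_i` is witnessed by a finite derivation: starting from the relators,
close under products, inverses and conjugation inside each level, and pass from level `i` to
level `i + 1` by extracting an `n`-th root with `n ∈ A`. The levels `tor^A_i` are the least
family closed under these rules, and whether a finite list of steps is a correct derivation is
primitive recursive once the enumerations of `R` and `A` are run for explicitly given numbers of
steps. Searching through all derivations, for all levels at once, enumerates `T^A_i` and `T^A_ω`.
-/

section FreeGroupWords

variable {α : Type*} [Primcodable α]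

theorem Primrec.list_replicate : Primrec₂ (List.replicate : ℕ → α → List α) :=
  (Primrec.nat_rec' Primrec.fst (Primrec.const [])
    (Primrec.list_cons.comp (Primrec.snd.comp Primrec.fst)
      (Primrec.snd.comp Primrec.snd)).to₂).of_eq fun p => by
    induction p.1 with
    | zero => rfl
    | succ n ih => simp only [List.replicate_succ, ← ih]

theorem Primrec.freeGroup_invRev : Primrec (FreeGroup.invRev : List (α × Bool) → _) :=
  Primrec.list_reverse.comp <| Primrec.list_map .id <|
    (Primrec.pair (Primrec.fst.comp .snd) (Primrec.not.comp (Primrec.snd.comp .snd))).to₂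

variable [DecidableEq α]

theorem Primrec.freeGroup_reduce : Primrec (FreeGroup.reduce : List (α × Bool) → _) := by
  have hstep : Primrec fun p : (α × Bool) × List (α × Bool) =>
      (p.2.casesOn [p.1] fun y L => if p.1.1 = y.1 ∧ p.1.2 = !y.2 then L else p.1 :: y :: L :
        List (α × Bool)) := by
    refine Primrec.list_casesOn (β := α × Bool) (h := fun p q =>
      if p.1.1 = q.1.1 ∧ p.1.2 = !q.1.2 then q.2 else p.1 :: q.1 :: q.2) Primrec.snd
      (Primrec.list_cons.comp Primrec.fst (.const [])) ?_
    exact Primrec.ite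
      (PrimrecPred.and
        (Primrec.eq.comp (Primrec.fst.comp (Primrec.fst.comp .fst))
          (Primrec.fst.comp (Primrec.fst.comp .snd)))
        (Primrec.eq.comp (Primrec.snd.comp (Primrec.fst.comp .fst))
          (Primrec.not.comp (Primrec.snd.comp (Primrec.fst.comp .snd)))))
      (Primrec.snd.comp .snd)
      (Primrec.list_cons.comp (Primrec.fst.comp .fst)
        (Primrec.list_cons.comp (Primrec.fst.comp .snd) (Primrec.snd.comp .snd)))
  refine (Primrec.list_foldr .id (.const ([] : List (α × Bool)))
    (hstep.comp .snd).to₂).of_eq fun L => ?_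
  induction L with
  | nil => rfl
  | cons x L ih => simp only [id, List.foldr_cons] at ih ⊢; rw [ih]; rfl

theorem PrimrecRel.freeGroup_mk_eq :
    PrimrecRel fun u v : List (α × Bool) => FreeGroup.mk u = FreeGroup.mk v :=
  (Primrec.eq.comp (Primrec.freeGroup_reduce.comp Primrec.fst)
    (Primrec.freeGroup_reduce.comp Primrec.snd)).of_eq fun _ =>
    ⟨FreeGroup.reduce.exact, FreeGroup.reduce.sound⟩

end FreeGroupWords

section RecursivelyEnumerable

variable {α β : Type*} [Primcodable α] [Primcodable β]

theorem REPred.exists_of_primrecRel {q : α → β → Prop} (hq : PrimrecRel q) :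
    REPred fun a => ∃ b, q a b := by
  classical
  let f : α → ℕ → Bool := fun a n =>
    ((Encodable.decode (α := β) n).map fun b => decide (q a b)).getD false
  have hf : Primrec₂ f := Primrec.option_getD.comp
    (Primrec.option_map (Primrec.decode.comp .snd)
      (hq.decide.comp (Primrec.fst.comp .fst) .snd).to₂)
    (.const false)
  refine (Partrec.rfind hf.to_comp.partrec₂).dom_re.of_eq fun a => ?_
  simp only [Nat.rfind_dom, PFun.coe_val, Part.mem_some_iff, Bool.true_eq, Part.some_dom,
    implies_true, and_true, f]
  constructor
  · rintro ⟨n, hn⟩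
    cases hb : Encodable.decode (α := β) n with
    | none => simp [hb] at hn
    | some b => exact ⟨b, by simpa [hb] using hn⟩
  · rintro ⟨b, hb⟩
    exact ⟨Encodable.encode b, by simpa [Encodable.encodek] using hb⟩

theorem REPred.exists_primrecRel {p : α → Prop} (hp : REPred p) :
    ∃ q : α → ℕ → Prop, PrimrecRel q ∧ ∀ a, p a ↔ ∃ n, q a n := by
  obtain ⟨c, hc⟩ := Nat.Partrec.Code.exists_code.1 hp
  refine ⟨fun a k => (Nat.Partrec.Code.evaln k c (Encodable.encode a)).isSome, ?_, fun a => ?_⟩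
  · exact Primrec.eq.comp (Primrec.option_isSome.comp (Nat.Partrec.Code.primrec_evaln.comp
      (Primrec.pair (Primrec.pair Primrec.snd (.const c)) (Primrec.encode.comp .fst))))
      (.const true)
  · have hdom : p a ↔ (Nat.Partrec.Code.eval c (Encodable.encode a)).Dom := by
      simp [hc, Encodable.encodek, Part.assert]
    simp only [hdom, Part.dom_iff_mem, Nat.Partrec.Code.evaln_complete, Option.isSome_iff_exists,
      Option.mem_def]
    exact exists_comm

theorem REPred.comp {p : β → Prop} (hp : REPred p) {f : α → β} (hf : Computable f) :
    REPred fun a => p (f a) :=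
  Partrec.comp hp hf

theorem REPred.exists {q : α → β → Prop} (hq : REPred fun x : α × β => q x.1 x.2) :
    REPred fun a => ∃ b, q a b := by
  obtain ⟨s, hs, hqs⟩ := hq.exists_primrecRel
  refine (REPred.exists_of_primrecRel (q := fun a (x : β × ℕ) => s (a, x.1) x.2) ?_).of_eq
    fun a => ?_
  · exact hs.comp (Primrec.pair Primrec.fst (Primrec.fst.comp Primrec.snd))
      (Primrec.snd.comp Primrec.snd)
  · simp only [Prod.exists]
    exact exists_congr fun b => (hqs (a, b)).symm

end RecursivelyEnumerable

section Derivations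

variable {α β : Type*} (r : List α → α → β → Prop)

/-- `r L a b` reads: `a` follows from the premises `L`, as certified by the witness `b`. -/
inductive Derivable : α → Prop
  | step {L : List α} {a : α} {b : β} : (∀ x ∈ L, Derivable x) → r L a b → Derivable a

/-- Each step `(a, b, L)` may only cite premises concluded by steps further down the list. -/
def IsDerivation : List (α × β × List α) → Prop
  | [] => True
  | (a, b, L) :: D => (∀ x ∈ L, ∃ e ∈ D, e.1 = x) ∧ r L a b ∧ IsDerivation D

variable {r}

theorem IsDerivation.append {D₁ D₂ : List (α × β × List α)} (h₁ : IsDerivation r D₁)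
    (h₂ : IsDerivation r D₂) : IsDerivation r (D₁ ++ D₂) := by
  induction D₁ with
  | nil => exact h₂
  | cons e D ih =>
    obtain ⟨hL, hr, hD⟩ := h₁
    refine ⟨fun x hx => ?_, hr, ih hD⟩
    obtain ⟨e', he', rfl⟩ := hL x hx
    exact ⟨e', List.mem_append_left _ he', rfl⟩

theorem IsDerivation.derivable {D : List (α × β × List α)} (hD : IsDerivation r D) :
    ∀ e ∈ D, Derivable r e.1 := by
  induction D with
  | nil => simp
  | cons e D ih =>
    obtain ⟨hL, hr, hD⟩ := hD
    intro e' he'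
    rcases List.mem_cons.1 he' with rfl | he'
    · refine .step (fun x hx => ?_) hr
      obtain ⟨e'', he'', rfl⟩ := hL x hx
      exact ih hD e'' he''
    · exact ih hD e' he'

theorem exists_isDerivation_of_forall {L : List α}
    (h : ∀ x ∈ L, ∃ D, IsDerivation r D ∧ ∃ e ∈ D, e.1 = x) :
    ∃ D, IsDerivation r D ∧ ∀ x ∈ L, ∃ e ∈ D, e.1 = x := by
  induction L with
  | nil => exact ⟨[], trivial, by simp⟩
  | cons y L ih =>
    obtain ⟨D₁, hD₁, hy⟩ := h y List.mem_cons_self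
    obtain ⟨D₂, hD₂, hL⟩ := ih fun x hx => h x (List.mem_cons_of_mem y hx)
    refine ⟨D₁ ++ D₂, hD₁.append hD₂, ?_⟩
    intro x hx
    rcases List.mem_cons.1 hx with rfl | hx
    · obtain ⟨e, he, rfl⟩ := hy
      exact ⟨e, List.mem_append_left _ he, rfl⟩
    · obtain ⟨e, he, rfl⟩ := hL x hx
      exact ⟨e, List.mem_append_right _ he, rfl⟩

theorem derivable_iff_exists_isDerivation {a : α} :
    Derivable r a ↔ ∃ D, IsDerivation r D ∧ ∃ e ∈ D, e.1 = a := by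
  refine ⟨fun h => ?_, fun ⟨D, hD, e, he, hea⟩ => hea ▸ hD.derivable e he⟩
  induction h with
  | @step L a b _ hr ih =>
    obtain ⟨D, hD, hL⟩ := exists_isDerivation_of_forall ih
    exact ⟨(a, b, L) :: D, ⟨hL, hr, hD⟩, _, List.mem_cons_self, rfl⟩

variable [Primcodable α] [Primcodable β] [DecidableEq α]

theorem primrecPred_isDerivation
    (hr : PrimrecPred fun p : List α × α × β => r p.1 p.2.1 p.2.2) :
    PrimrecPred (IsDerivation r) := by
  classical
  let valid : (α × β × List α) × List (α × β × List α) → Prop := fun p =>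
    (∀ x ∈ p.1.2.2, ∃ e ∈ p.2, e.1 = x) ∧ r p.1.2.2 p.1.1 p.1.2.1
  have hconcl : PrimrecRel fun (L : List α) (D : List (α × β × List α)) =>
      ∀ x ∈ L, ∃ e ∈ D, e.1 = x :=
    have hfst : PrimrecRel fun (e : α × β × List α) (x : α) => e.1 = x :=
      Primrec.eq.comp (Primrec.fst.comp .fst) .snd
    PrimrecRel.forall_mem_list hfst.exists_mem_list.swap
  have hvalid : PrimrecPred valid :=
    .and (hconcl.comp (Primrec.snd.comp (Primrec.snd.comp .fst)) .snd)
      (hr.comp (Primrec.pair (Primrec.snd.comp (Primrec.snd.comp .fst))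
        (Primrec.pair (Primrec.fst.comp .fst) (Primrec.fst.comp (Primrec.snd.comp .fst)))))
  have hrec := Primrec.list_rec (f := id) (g := fun _ => true)
    (h := fun _ p => decide (valid (p.1, p.2.1)) && p.2.2) .id (.const true)
    (Primrec.and.comp (hvalid.decide.comp (Primrec.pair (Primrec.fst.comp .snd)
      (Primrec.fst.comp (Primrec.snd.comp .snd))))
      (Primrec.snd.comp (Primrec.snd.comp .snd))).to₂
  refine (Primrec.eq.comp hrec (.const true)).of_eq fun D => ?_
  induction D with
  | nil => simp [IsDerivation]
  | cons e D ih =>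
    obtain ⟨a, b, L⟩ := e
    rw [IsDerivation, ← ih]
    simp only [Prod.exists, exists_and_right, exists_eq_right, Bool.decide_and, id_eq,
      Bool.and_eq_true, decide_eq_true_eq, and_assoc, valid]

theorem rePred_derivable (hr : PrimrecPred fun p : List α × α × β => r p.1 p.2.1 p.2.2) :
    REPred (Derivable r) :=
  have hconcl : PrimrecRel fun (D : List (α × β × List α)) (a : α) => ∃ e ∈ D, e.1 = a :=
    PrimrecRel.exists_mem_list (Primrec.eq.comp (Primrec.fst.comp .fst) .snd)
  (REPred.exists_of_primrecRel (q := fun a D => IsDerivation r D ∧ ∃ e ∈ D, e.1 = a)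
    (.and ((primrecPred_isDerivation hr).comp .snd) (hconcl.comp .snd .fst))).of_eq
    fun _ => derivable_iff_exists_isDerivation.symm

end Derivations

theorem FreeGroup.mk_flatMap {α β : Type*} (L : List β) (f : β → List (α × Bool)) :
    FreeGroup.mk (L.flatMap f) = (L.map fun x => FreeGroup.mk (f x)).prod := by
  induction L with
  | nil => rfl
  | cons x L ih => rw [List.flatMap_cons, ← FreeGroup.mul_mk, ih, List.map_cons, List.prod_cons]

open FreeGroup (mk)

/-- An item `(i, w)` claims that `w` represents an element of `tor^A_i`, where `qR w m` and
`qA n m` say that the enumerations of `R` and `A` produce `w` and `n` within `m` steps. The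
witness `(n, m, c)` supplies the exponent, the number of steps and the conjugator. -/
inductive TorRule (qR : List (ℕ × Bool) → ℕ → Prop) (qA : ℕ → ℕ → Prop) :
    List (ℕ × List (ℕ × Bool)) → ℕ × List (ℕ × Bool) → ℕ × ℕ × List (ℕ × Bool) → Prop
  | prod {L i w b} : (∀ x ∈ L, x.1 = i) → mk (L.flatMap Prod.snd) = mk w →
      TorRule qR qA L (i, w) b
  | rel {L i w n m c} : qR w m → TorRule qR qA L (i, w) (n, m, c)
  | inv {L i x w b} : (i, x) ∈ L → (mk x)⁻¹ = mk w → TorRule qR qA L (i, w) b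
  | conj {L i x w n m c} : (i, x) ∈ L → mk c * mk x * (mk c)⁻¹ = mk w →
      TorRule qR qA L (i, w) (n, m, c)
  | root {L i x w n m c} : (i, x) ∈ L → qA n m → mk w ^ n = mk x →
      TorRule qR qA L (i + 1, w) (n, m, c)

variable {qR : List (ℕ × Bool) → ℕ → Prop} {qA : ℕ → ℕ → Prop}

theorem torRule_iff {L : List (ℕ × List (ℕ × Bool))} {i n m : ℕ} {w c : List (ℕ × Bool)} :
    TorRule qR qA L (i, w) (n, m, c) ↔
      ((∀ x ∈ L, x.1 = i) ∧ mk (L.flatMap Prod.snd) = mk w) ∨ qR w m ∨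
      (∃ x ∈ L, x.1 = i ∧ (mk x.2)⁻¹ = mk w) ∨
      (∃ x ∈ L, x.1 = i ∧ mk c * mk x.2 * (mk c)⁻¹ = mk w) ∨
      (∃ x ∈ L, x.1 + 1 = i ∧ qA n m ∧ mk w ^ n = mk x.2) := by
  constructor
  · rintro (⟨hL, h⟩ | h | ⟨hx, h⟩ | ⟨hx, h⟩ | ⟨hx, hn, h⟩)
    · exact .inl ⟨hL, h⟩
    · exact .inr <| .inl h
    · exact .inr <| .inr <| .inl ⟨_, hx, rfl, h⟩
    · exact .inr <| .inr <| .inr <| .inl ⟨_, hx, rfl, h⟩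
    · exact .inr <| .inr <| .inr <| .inr ⟨_, hx, rfl, hn, h⟩
  · rintro (⟨hL, h⟩ | h | ⟨⟨_, x⟩, hx, rfl, h⟩ | ⟨⟨_, x⟩, hx, rfl, h⟩ | ⟨⟨_, x⟩, hx, rfl, hn, h⟩)
    · exact .prod hL h
    · exact .rel h
    · exact .inv hx h
    · exact .conj hx h
    · exact .root hx hn h

theorem primrecPred_torRule (hqR : PrimrecRel qR) (hqA : PrimrecRel qA) :
    PrimrecPred fun p : List (ℕ × List (ℕ × Bool)) × (ℕ × List (ℕ × Bool)) ×
        (ℕ × ℕ × List (ℕ × Bool)) => TorRule qR qA p.1 p.2.1 p.2.2 := by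
  let T := List (ℕ × List (ℕ × Bool)) × (ℕ × List (ℕ × Bool)) × (ℕ × ℕ × List (ℕ × Bool))
  have hi : Primrec fun p : T => p.2.1.1 := Primrec.fst.comp (Primrec.fst.comp .snd)
  have hw : Primrec fun p : T => p.2.1.2 := Primrec.snd.comp (Primrec.fst.comp .snd)
  have hn : Primrec fun p : T => p.2.2.1 := Primrec.fst.comp (Primrec.snd.comp .snd)
  have hm : Primrec fun p : T => p.2.2.2.1 :=
    Primrec.fst.comp (Primrec.snd.comp (Primrec.snd.comp .snd))
  have hc : Primrec fun p : T => p.2.2.2.2 :=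
    Primrec.snd.comp (Primrec.snd.comp (Primrec.snd.comp .snd))
  have hx : Primrec fun q : (ℕ × List (ℕ × Bool)) × T => q.1.2 := Primrec.snd.comp .fst
  have hmk := PrimrecRel.freeGroup_mk_eq (α := ℕ)
  have hexists {P : ℕ × List (ℕ × Bool) → T → Prop}
      (hP : PrimrecPred fun q : (ℕ × List (ℕ × Bool)) × T => P q.1 q.2) :
      PrimrecPred fun p : T => ∃ x ∈ p.1, P x p :=
    (PrimrecRel.exists_mem_list hP).comp .fst .id
  have hlevel : PrimrecRel fun (x : ℕ × List (ℕ × Bool)) (p : T) => x.1 = p.2.1.1 :=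
    Primrec.eq.comp (Primrec.fst.comp .fst) (hi.comp .snd)
  have hprod : PrimrecPred fun p : T =>
      (∀ x ∈ p.1, x.1 = p.2.1.1) ∧ mk (p.1.flatMap Prod.snd) = mk p.2.1.2 :=
    .and ((PrimrecRel.forall_mem_list hlevel).comp .fst .id)
      (hmk.comp (Primrec.list_flatMap .fst (Primrec.snd.comp .snd).to₂) hw)
  have hinv : PrimrecPred fun p : T => ∃ x ∈ p.1, x.1 = p.2.1.1 ∧ (mk x.2)⁻¹ = mk p.2.1.2 :=
    hexists <| .and hlevel
      ((hmk.comp (Primrec.freeGroup_invRev.comp hx) (hw.comp .snd)).of_eq fun _ => by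
        rw [FreeGroup.inv_mk])
  have hconj : PrimrecPred fun p : T =>
      ∃ x ∈ p.1, x.1 = p.2.1.1 ∧ mk p.2.2.2.2 * mk x.2 * (mk p.2.2.2.2)⁻¹ = mk p.2.1.2 :=
    hexists <| .and hlevel
      ((hmk.comp (Primrec.list_append.comp (Primrec.list_append.comp (hc.comp .snd) hx)
        (Primrec.freeGroup_invRev.comp (hc.comp .snd))) (hw.comp .snd)).of_eq fun _ => by
          rw [FreeGroup.inv_mk, FreeGroup.mul_mk, FreeGroup.mul_mk])
  have hroot : PrimrecPred fun p : T =>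
      ∃ x ∈ p.1, x.1 + 1 = p.2.1.1 ∧ qA p.2.2.1 p.2.2.2.1 ∧ mk p.2.1.2 ^ p.2.2.1 = mk x.2 :=
    hexists <| .and (Primrec.eq.comp (Primrec.succ.comp (Primrec.fst.comp .fst)) (hi.comp .snd))
      (.and (hqA.comp (hn.comp .snd) (hm.comp .snd))
        ((hmk.comp (Primrec.list_flatten.comp (Primrec.list_replicate.comp (hn.comp .snd)
          (hw.comp .snd))) hx).of_eq fun _ => by rw [FreeGroup.pow_mk]))
  exact (hprod.or ((hqR.comp hw hm).or (hinv.or (hconj.or hroot)))).of_eq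
    fun _ => torRule_iff.symm

section Presentation

variable {R : Set (List (ℕ × Bool))} {A : Set ℕ}

local notation "G" => PresentedGroup (FreeGroup.mk '' R)
local notation "π" => PresentedGroup.mk (FreeGroup.mk '' R)

theorem mem_torX_of_derivable (hR : ∀ w m, qR w m → w ∈ R) (hA : ∀ n m, qA n m → n ∈ A)
    {a : ℕ × List (ℕ × Bool)} (h : Derivable (TorRule qR qA) a) :
    π (mk a.2) ∈ torX A G a.1 := by
  induction h with
  | step _ hr ih =>
    cases hr with
    | prod hL h =>
      rw [← h, FreeGroup.mk_flatMap, map_list_prod, List.map_map]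
      refine list_prod_mem fun g hg => ?_
      obtain ⟨x, hx, rfl⟩ := List.mem_map.1 hg
      exact hL x hx ▸ ih x hx
    | rel h =>
      rw [PresentedGroup.one_of_mem (Set.mem_image_of_mem _ (hR _ _ h))]
      exact one_mem _
    | inv hx h =>
      rw [← h, map_inv]
      exact inv_mem (ih _ hx)
    | conj hx h =>
      rw [← h, map_mul, map_mul, map_inv]
      exact (torX_normal _ _ _).conj_mem _ (ih _ hx) _
    | root hx hn h =>
      refine Subgroup.subset_normalClosure ⟨_, hA _ _ hn, ?_⟩
      rw [← map_pow, h]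
      exact ih _ hx

theorem derivable_torRule_of_mk_eq {i : ℕ} {u w : List (ℕ × Bool)}
    (h : Derivable (TorRule qR qA) (i, u)) (huw : mk u = mk w) :
    Derivable (TorRule qR qA) (i, w) :=
  .step (L := [(i, u)]) (b := (0, 0, [])) (List.forall_mem_singleton.2 h)
    (.conj List.mem_cons_self (by rw [← FreeGroup.one_eq_mk, one_mul, inv_one, mul_one, huw]))

variable (qR qA) in
def torDerivableSubgroup (i : ℕ) : Subgroup (FreeGroup ℕ) where
  carrier := {g | Derivable (TorRule qR qA) (i, g.toWord)}
  one_mem' := Derivable.step (L := []) (b := (0, 0, [])) (List.forall_mem_nil _)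
    (.prod (List.forall_mem_nil _) (by rw [FreeGroup.mk_toWord]; rfl))
  mul_mem' {g h} hg hh := Derivable.step (L := [(i, g.toWord), (i, h.toWord)])
    (b := (0, 0, [])) (List.forall_mem_cons.2 ⟨hg, List.forall_mem_singleton.2 hh⟩)
    (.prod (by simp) (by simp [← FreeGroup.mul_mk, FreeGroup.mk_toWord]))
  inv_mem' {g} hg := Derivable.step (L := [(i, g.toWord)]) (b := (0, 0, []))
    (List.forall_mem_singleton.2 hg)
    (.inv List.mem_cons_self (by simp only [FreeGroup.mk_toWord]))

theorem mem_torDerivableSubgroup {i : ℕ} {g : FreeGroup ℕ} :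
    g ∈ torDerivableSubgroup qR qA i ↔ Derivable (TorRule qR qA) (i, g.toWord) :=
  Iff.rfl

instance torDerivableSubgroup_normal (i : ℕ) : (torDerivableSubgroup qR qA i).Normal where
  conj_mem g hg c := Derivable.step (L := [(i, g.toWord)]) (b := (0, 0, c.toWord))
    (List.forall_mem_singleton.2 (mem_torDerivableSubgroup.1 hg))
    (.conj List.mem_cons_self (by simp only [FreeGroup.mk_toWord]))

theorem torDerivableSubgroup_le_succ {i n m : ℕ} {g : FreeGroup ℕ} (hnm : qA n m)
    (hg : g ^ n ∈ torDerivableSubgroup qR qA i) : g ∈ torDerivableSubgroup qR qA (i + 1) :=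
  mem_torDerivableSubgroup.2 <| .step (L := [(i, (g ^ n).toWord)]) (b := (n, m, []))
    (List.forall_mem_singleton.2 (mem_torDerivableSubgroup.1 hg))
    (.root List.mem_cons_self hnm (by simp only [FreeGroup.mk_toWord]))

theorem ker_mk_le_torDerivableSubgroup (hR : ∀ w ∈ R, ∃ m, qR w m) (i : ℕ) :
    (π).ker ≤ torDerivableSubgroup qR qA i := by
  have hker : (π).ker = Subgroup.normalClosure (FreeGroup.mk '' R) :=
    Subgroup.ext fun _ => PresentedGroup.mk_eq_one_iff
  rw [hker]
  refine Subgroup.normalClosure_le_normal ?_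
  rintro _ ⟨w, hw, rfl⟩
  obtain ⟨m, hm⟩ := hR w hw
  exact mem_torDerivableSubgroup.2 <| derivable_torRule_of_mk_eq
    (.step (L := []) (b := (0, m, [])) (List.forall_mem_nil _) (.rel hm))
    FreeGroup.mk_toWord.symm

theorem comap_torX_le_torDerivableSubgroup (hR : ∀ w ∈ R, ∃ m, qR w m)
    (hA : ∀ n ∈ A, ∃ m, qA n m) (i : ℕ) :
    (torX A G i).comap π ≤ torDerivableSubgroup qR qA i := by
  induction i with
  | zero => exact ker_mk_le_torDerivableSubgroup hR 0
  | succ i ih =>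
    have hsurj := PresentedGroup.mk_surjective (FreeGroup.mk '' R)
    set S := {g : G | ∃ n ∈ A, g ^ n ∈ torX A G i}
    have hcomap : (torX A G (i + 1)).comap π = Subgroup.normalClosure (π ⁻¹' S) ⊔ (π).ker := by
      rw [← Subgroup.comap_map_eq, Subgroup.map_normalClosure _ _ hsurj,
        Set.image_preimage_eq S hsurj]
      rfl
    rw [hcomap]
    refine sup_le (Subgroup.normalClosure_le_normal fun g ⟨n, hn, hgn⟩ => ?_)
      (ker_mk_le_torDerivableSubgroup hR _)
    obtain ⟨m, hm⟩ := hA n hn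
    exact torDerivableSubgroup_le_succ hm (ih (by rwa [Subgroup.mem_comap, map_pow]))

theorem derivable_torRule_iff (hR : ∀ w, w ∈ R ↔ ∃ m, qR w m) (hA : ∀ n, n ∈ A ↔ ∃ m, qA n m)
    (i : ℕ) (w : List (ℕ × Bool)) :
    Derivable (TorRule qR qA) (i, w) ↔ π (mk w) ∈ torX A G i := by
  refine ⟨fun h => mem_torX_of_derivable (fun w m h => (hR w).2 ⟨m, h⟩)
    (fun n m h => (hA n).2 ⟨m, h⟩) h, fun h => ?_⟩
  exact derivable_torRule_of_mk_eq (mem_torDerivableSubgroup.1 <|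
    comap_torX_le_torDerivableSubgroup (fun w => (hR w).1) (fun n => (hA n).1) i h)
    FreeGroup.mk_toWord

end Presentation

theorem mem_torOmega_iff {G : Type*} [Group G] {A : Set ℕ} {g : G} :
    g ∈ torOmega A G ↔ ∃ i, g ∈ torX A G i :=
  Set.mem_iUnion

theorem torX_words_re (R : Set (List (ℕ × Bool))) (hR : REPred' (· ∈ R))
    (A : Set ℕ) (hA : REPred' (· ∈ A)) :
    (∀ i : ℕ, REPred' (fun w : List (ℕ × Bool) =>
        PresentedGroup.mk (FreeGroup.mk '' R) (FreeGroup.mk w) ∈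
          torX A (PresentedGroup (FreeGroup.mk '' R)) i)) ∧
    REPred' (fun w : List (ℕ × Bool) =>
      PresentedGroup.mk (FreeGroup.mk '' R) (FreeGroup.mk w) ∈
        torOmega A (PresentedGroup (FreeGroup.mk '' R))) := by
  obtain ⟨qR, hqR, hRq⟩ := REPred.exists_primrecRel hR
  obtain ⟨qA, hqA, hAq⟩ := REPred.exists_primrecRel hA
  have hder : REPred (Derivable (TorRule qR qA)) :=
    rePred_derivable (primrecPred_torRule hqR hqA)
  refine ⟨fun i => ?_, ?_⟩
  · exact (hder.comp (Computable.pair (.const i) .id)).of_eq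
      fun w => derivable_torRule_iff hRq hAq i w
  · refine (REPred.exists (q := fun w i => Derivable (TorRule qR qA) (i, w))
      (hder.comp (Computable.pair .snd .fst))).of_eq fun w => ?_
    simp only [mem_torOmega_iff, derivable_torRule_iff hRq hAq]
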